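/- With h as above, for 0 < x < 1: h(x) = (4m x^{2m−1}/√(1−x²)) · ∫_x^1 t^{−2m}/√(1−t²) dt. -/

import Mathlib

open Finset

noncomputable def betaCoef (m k : ℕ) : ℝ :=
  2 * (∏ j ∈ Finset.range (k + 1), ((2 * m : ℝ) - 2 * j)) /
    (∏ j ∈ Finset.range (k + 1), ((2 * m : ℝ) - 2 * j - 1))

noncomputable def hFun (m : ℕ) (x : ℝ) : ℝ :=
  ∑ k ∈ Finset.range m, betaCoef m k * x ^ (2 * k)

noncomputable def gFun (m : ℕ) (x : ℝ) : ℝ :=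
  ∑ k ∈ Finset.range m, betaCoef m k * (2 * (k : ℝ)) * x ^ (2 * k - 1)

lemma odd_ne (m j : ℕ) : (2 * (m : ℝ) - 2 * j - 1) ≠ 0 := by
  have h : (2 * (m : ℝ) - 2 * j - 1) = ((2 * (m : ℤ) - 2 * j - 1 : ℤ) : ℝ) := by push_cast; ring
  rw [h]
  exact_mod_cast (by omega : (2 * (m : ℤ) - 2 * (j : ℤ) - 1) ≠ 0)

lemma denom_ne (m k : ℕ) : (∏ j ∈ Finset.range (k + 1), ((2 * m : ℝ) - 2 * j - 1)) ≠ 0 :=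
  Finset.prod_ne_zero_iff.mpr fun j _ => odd_ne m j

lemma beta_rec (m k : ℕ) :
    (2 * (m : ℝ) - 2 * k - 3) * betaCoef m (k + 1) = (2 * (m : ℝ) - 2 * k - 2) * betaCoef m k := by
  unfold betaCoef
  rw [Finset.prod_range_succ (fun j => ((2 * m : ℝ) - 2 * j)),
    Finset.prod_range_succ (fun j => ((2 * m : ℝ) - 2 * j - 1))]
  have hD := denom_ne m k
  have hb := odd_ne m (k + 1)
  push_cast at hb ⊢
  rw [mul_div_assoc', mul_div_assoc', div_eq_div_iff (mul_ne_zero hD hb) hD]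
  ring

lemma beta_zero (m : ℕ) : (2 * (m : ℝ) - 1) * betaCoef m 0 = 4 * m := by
  unfold betaCoef
  have h := odd_ne m 0
  rw [zero_add, Finset.prod_range_one, Finset.prod_range_one]
  norm_num at h ⊢
  rw [← mul_div_assoc, div_eq_iff h]
  ring

lemma beta_top (m : ℕ) : betaCoef m m = 0 := by
  unfold betaCoef
  have h : (∏ j ∈ Finset.range (m + 1), ((2 * m : ℝ) - 2 * j)) = 0 :=
    Finset.prod_eq_zero (Finset.mem_range.mpr (Nat.lt_succ_self m)) (by push_cast; ring)
  rw [h]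
  simp

lemma hFun_hasDerivAt (m : ℕ) (x : ℝ) : HasDerivAt (hFun m) (gFun m x) x := by
  unfold hFun gFun
  apply HasDerivAt.fun_sum
  intro k _
  have h := (hasDerivAt_pow (2 * k) x).const_mul (betaCoef m k)
  refine h.congr_deriv (Eq.symm ?_)
  push_cast
  ring

lemma ode (m : ℕ) (hm : 1 ≤ m) (x : ℝ) :
    x * (x ^ 2 - 1) * gFun m x + ((2 * (m : ℝ) - 1) - 2 * ((m : ℝ) - 1) * x ^ 2) * hFun m x
      = 4 * m := by
  set u : ℕ → ℝ := fun k => (2 * (m : ℝ) - 1 - 2 * k) * betaCoef m k * x ^ (2 * k) with hu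
  have step : ∀ k ∈ Finset.range m,
      x * (x ^ 2 - 1) * (betaCoef m k * (2 * (k : ℝ)) * x ^ (2 * k - 1))
        + ((2 * (m : ℝ) - 1) - 2 * ((m : ℝ) - 1) * x ^ 2) * (betaCoef m k * x ^ (2 * k))
      = u k - u (k + 1) := by
    intro k _
    have hrec := beta_rec m k
    simp only [hu]
    cases k with
    | zero =>
      push_cast at hrec ⊢
      norm_num
      linear_combination (x ^ 2) * hrec
    | succ j =>
      have e1 : 2 * (j + 1) - 1 = 2 * j + 1 := by omega
      rw [e1]
      push_cast at hrec ⊢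
      linear_combination (x ^ (2 * (j + 1) + 2)) * hrec
  unfold gFun hFun
  rw [Finset.mul_sum, Finset.mul_sum, ← Finset.sum_add_distrib, Finset.sum_congr rfl step,
    Finset.sum_range_sub' u]
  have h0 := beta_zero m
  have hT := beta_top m
  simp only [hu, hT, Nat.cast_zero, mul_zero, zero_mul, pow_zero, mul_one, sub_zero]
  linear_combination h0

lemma F_hasDerivAt (m : ℕ) (hm : 1 ≤ m) (t : ℝ) (ht0 : 0 < t) (ht1 : t < 1) :
    HasDerivAt (fun t => hFun m t * Real.sqrt (1 - t ^ 2) / (4 * (m : ℝ) * t ^ (2 * m - 1)))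
      (-((t ^ (2 * m))⁻¹ / Real.sqrt (1 - t ^ 2))) t := by
  obtain ⟨p, rfl⟩ : ∃ p, m = p + 1 := ⟨m - 1, by omega⟩
  have e1 : 2 * (p + 1) - 1 = 2 * p + 1 := by omega
  have e2 : 2 * (p + 1) = 2 * p + 2 := by omega
  have hs : 0 < 1 - t ^ 2 := by nlinarith
  have hSpos : 0 < Real.sqrt (1 - t ^ 2) := Real.sqrt_pos.mpr hs
  have hS2 : Real.sqrt (1 - t ^ 2) ^ 2 = 1 - t ^ 2 := Real.sq_sqrt hs.le
  have h1 : HasDerivAt (fun t : ℝ => 1 - t ^ 2) (-(2 * t)) t := by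
    simpa using ((hasDerivAt_pow 2 t).const_sub 1)
  have hsq : HasDerivAt (fun t : ℝ => Real.sqrt (1 - t ^ 2))
      (1 / (2 * Real.sqrt (1 - t ^ 2)) * -(2 * t)) t :=
    (Real.hasDerivAt_sqrt hs.ne').comp t h1
  have hh := hFun_hasDerivAt (p + 1) t
  have hden : HasDerivAt (fun t : ℝ => 4 * ((p + 1 : ℕ) : ℝ) * t ^ (2 * (p + 1) - 1))
      (4 * ((p + 1 : ℕ) : ℝ) * ((2 * (p : ℝ) + 1) * t ^ (2 * p))) t := by
    have h := (hasDerivAt_pow (2 * p + 1) t).const_mul (4 * ((p + 1 : ℕ) : ℝ))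
    simp only [e1]
    refine h.congr_deriv (Eq.symm ?_)
    push_cast
    ring_nf
  have hne : 4 * ((p + 1 : ℕ) : ℝ) * t ^ (2 * (p + 1) - 1) ≠ 0 := by positivity
  have hD := (hh.mul hsq).div hden hne
  have key : t * gFun (p + 1) t * (1 - t ^ 2) - hFun (p + 1) t * t ^ 2
      - (2 * (((p + 1 : ℕ)) : ℝ) - 1) * hFun (p + 1) t * (1 - t ^ 2)
      = -(4 * ((p + 1 : ℕ) : ℝ)) := by
    linear_combination -(ode (p + 1) hm t)
  refine hD.congr_deriv (Eq.symm ?_)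
  rw [e1, e2]
  push_cast at key ⊢
  simp only [Pi.mul_apply]
  field_simp
  linear_combination (-(t ^ (4 * p + 2))) * key +
    (-(t ^ (4 * p + 2) * (gFun (p + 1) t * t - (2 * (p : ℝ) + 1) * hFun (p + 1) t))) * hS2

lemma hFun_continuous (m : ℕ) : Continuous (hFun m) := by
  unfold hFun
  exact continuous_finset_sum _ fun k _ => continuous_const.mul (continuous_pow (M := ℝ) _)

/-- For `0 < x < 1`,
`h(x) = (4m x^{2m−1}/√(1−x²)) ∫_x^1 t^{−2m}/√(1−t²) dt`. -/
theorem hFun_integral_rep (m : ℕ) (hm : 1 ≤ m) (x : ℝ) (hx0 : 0 < x) (hx1 : x < 1) :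
    hFun m x = (4 * m * x ^ (2 * m - 1) / Real.sqrt (1 - x ^ 2)) *
      ∫ t in x..1, (t ^ (2 * m))⁻¹ / Real.sqrt (1 - t ^ 2) := by
  have hs : 0 < 1 - x ^ 2 := by nlinarith
  have hSx : 0 < Real.sqrt (1 - x ^ 2) := Real.sqrt_pos.mpr hs
  set F : ℝ → ℝ := fun t => hFun m t * Real.sqrt (1 - t ^ 2) / (4 * (m : ℝ) * t ^ (2 * m - 1))
    with hF
  have hderiv : ∀ t ∈ Set.Ioo x 1, HasDerivAt F (-((t ^ (2 * m))⁻¹ / Real.sqrt (1 - t ^ 2))) t :=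
    fun t ht => F_hasDerivAt m hm t (hx0.trans ht.1) ht.2
  -- integrability of the integrand
  have hint : IntervalIntegrable (fun t => (t ^ (2 * m))⁻¹ / Real.sqrt (1 - t ^ 2))
      MeasureTheory.volume x 1 := by
    have base : IntervalIntegrable (fun t : ℝ => (x ^ (2 * m))⁻¹ * (1 - t) ^ (-(1 / 2) : ℝ))
        MeasureTheory.volume x 1 := by
      have h0 := (intervalIntegral.intervalIntegrable_rpow'
        (a := 1 - x) (b := 0) (r := -(1 / 2)) (by norm_num)).comp_sub_left 1
      have h1 := h0.const_mul ((x ^ (2 * m))⁻¹)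
      simpa using h1
    apply base.mono_fun
    · exact (((measurable_id.pow_const (2 * m)).inv).div
        (Real.continuous_sqrt.measurable.comp
          (measurable_const.sub (measurable_id.pow_const 2)))).aestronglyMeasurable
    · rw [Set.uIoc_of_le hx1.le]
      filter_upwards [MeasureTheory.ae_restrict_mem measurableSet_Ioc] with t ht
      have htx : x < t := ht.1
      have ht1 : t ≤ 1 := ht.2
      have ht0 : 0 < t := hx0.trans htx
      have h1t : 0 ≤ 1 - t := by linarith
      have hfnn : 0 ≤ (t ^ (2 * m))⁻¹ / Real.sqrt (1 - t ^ 2) := by positivity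
      rw [Real.norm_of_nonneg hfnn]
      have hb1 : (t ^ (2 * m))⁻¹ ≤ (x ^ (2 * m))⁻¹ := by
        apply inv_anti₀ (by positivity)
        exact pow_le_pow_left₀ hx0.le htx.le _
      have hb2 : Real.sqrt (1 - t) ≤ Real.sqrt (1 - t ^ 2) := by
        apply Real.sqrt_le_sqrt
        nlinarith
      have hrw : (1 - t) ^ (-(1 / 2) : ℝ) = (Real.sqrt (1 - t))⁻¹ := by
        rw [Real.rpow_neg h1t, Real.sqrt_eq_rpow]
      rw [hrw]
      rcases eq_or_lt_of_le ht1 with rfl | ht1'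
      · have h0 : Real.sqrt (1 - 1 ^ 2) = 0 := by norm_num
        rw [h0, div_zero]
        exact norm_nonneg _
      · have h1t' : 0 < 1 - t := by linarith
        have hst : 0 < Real.sqrt (1 - t) := Real.sqrt_pos.mpr h1t'
        calc (t ^ (2 * m))⁻¹ / Real.sqrt (1 - t ^ 2)
            ≤ (x ^ (2 * m))⁻¹ / Real.sqrt (1 - t) := div_le_div₀ (by positivity) hb1 hst hb2
          _ = (x ^ (2 * m))⁻¹ * (Real.sqrt (1 - t))⁻¹ := div_eq_mul_inv _ _
          _ ≤ ‖(x ^ (2 * m))⁻¹ * (Real.sqrt (1 - t))⁻¹‖ := Real.le_norm_self _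
  have hmpos : (0:ℝ) < m := by exact_mod_cast hm
  have hFx : Filter.Tendsto F (nhdsWithin x (Set.Ioi x)) (nhds (F x)) :=
    (F_hasDerivAt m hm x hx0 hx1).continuousAt.continuousWithinAt
  have hF1 : Filter.Tendsto F (nhdsWithin 1 (Set.Iio 1)) (nhds 0) := by
    have hc : ContinuousAt F 1 := by
      apply ContinuousAt.div
      · exact (hFun_continuous m).continuousAt.mul
          ((Real.continuous_sqrt.comp (by fun_prop)).continuousAt)
      · fun_prop
      · simp
        positivity
    have hF1v : F 1 = 0 := by simp [hF]
    rw [← hF1v]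
    exact hc.continuousWithinAt
  have heq := intervalIntegral.integral_eq_sub_of_hasDerivAt_of_tendsto hx1 hderiv hint.neg hFx hF1
  rw [intervalIntegral.integral_neg] at heq
  have hIF : (∫ t in x..1, (t ^ (2 * m))⁻¹ / Real.sqrt (1 - t ^ 2)) = F x := by linarith
  rw [hIF]
  simp only [hF]
  have hxne : x ^ (2 * m - 1) ≠ 0 := by positivity
  field_simp
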